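/- Let n ≥ 1 and let σ, τ be permutations of Fin n, each satisfying ℓ(σ) + ℓ(σ⁻¹ * s) = n − 1 and ℓ(τ) + ℓ(τ⁻¹ * s) = n − 1, such that σ⁻¹ * τ is a transposition. Then either every σ-orbit is contained in a τ-orbit and ℓ(τ) = ℓ(σ) + 1, or every τ-orbit is contained in a σ-orbit and ℓ(σ) = ℓ(τ) + 1. (Edges of the interval from e to s are exactly covering relations of the refinement order on noncrossing partitions.) -/

import Mathlib

/-!
Multiplying a permutation on the right by a transposition `(a b)` merges the cycles through `a`
and `b` when they are distinct, and splits their common cycle into two otherwise; every other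
cycle is unchanged. So the number of orbits changes by exactly one, and by induction the least
number of transpositions with product `σ` is `n` minus the number of orbits of `σ`. If
`σ⁻¹ * τ = (a b)`, then `τ = σ * (a b)` and `σ = τ * (a b)`; whichever of the two separates `a`
from `b` has the finer orbit partition, with one orbit more and length one less.
-/

/-- Minimal number of transpositions whose product is `σ` (0 for the identity);
this is the graph distance from the identity to `σ` in the Cayley graph of the
symmetric group on `Fin n` generated by all transpositions. -/
noncomputable def swapLength (n : ℕ) (σ : Equiv.Perm (Fin n)) : ℕ :=
  sInf {k | ∃ l : List (Equiv.Perm (Fin n)),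
    l.length = k ∧ (∀ t ∈ l, t.IsSwap) ∧ l.prod = σ}

open Equiv Function

namespace Setoid

variable {α : Type*}

def mergeClasses (s : Setoid α) (a b : α) : Setoid α where
  r x y := s x y ∨ ((s x a ∨ s x b) ∧ (s y a ∨ s y b))
  iseqv := by
    refine ⟨fun x => Or.inl (s.refl x), fun h => h.imp s.symm And.symm, ?_⟩
    rintro x y z (hxy | ⟨hx, hy⟩) (hyz | ⟨hy', hz⟩)
    · exact Or.inl (s.trans hxy hyz)
    · exact Or.inr ⟨hy'.imp (s.trans hxy) (s.trans hxy), hz⟩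
    · exact Or.inr ⟨hx, hy.imp (s.trans (s.symm hyz)) (s.trans (s.symm hyz))⟩
    · exact Or.inr ⟨hx, hz⟩

theorem card_quotient_mergeClasses [Finite α] {s : Setoid α} {a b : α} (hab : ¬s a b) :
    Nat.card (Quotient (s.mergeClasses a b)) + 1 = Nat.card (Quotient s) := by
  let q : Quotient s → Quotient (s.mergeClasses a b) := Quotient.map' id fun _ _ => Or.inl
  have hinj : Set.InjOn q {Quotient.mk s b}ᶜ := by
    rintro ⟨x⟩ hx ⟨y⟩ hy hxy
    have hx : ¬s x b := fun h => hx (Quotient.sound h)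
    have hy : ¬s y b := fun h => hy (Quotient.sound h)
    refine Quotient.sound ?_
    rcases Quotient.exact hxy with h | ⟨hxa | hxb, hya | hyb⟩
    exacts [h, s.trans hxa (s.symm hya), (hy hyb).elim, (hx hxb).elim, (hx hxb).elim]
  have himage : q '' {Quotient.mk s b}ᶜ = Set.univ := by
    refine Set.eq_univ_of_forall fun x => ?_
    induction x using Quotient.inductionOn with | h x => ?_
    by_cases hxb : s x b
    · exact ⟨Quotient.mk s a, fun h => hab (Quotient.exact h),
        Quotient.sound (Or.inr ⟨Or.inl (s.refl a), Or.inr hxb⟩)⟩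
    · exact ⟨Quotient.mk s x, fun h => hxb (Quotient.exact h), rfl⟩
  rw [← Set.ncard_univ, ← himage, hinj.ncard_image, ← Set.ncard_univ,
    Set.compl_eq_univ_sdiff, Set.ncard_sdiff_singleton_add_one (Set.mem_univ _)]

end Setoid

namespace Equiv.Perm

variable {α : Type*} {f : Perm α} {a b x y : α}

theorem sameCycle_le_of_equivalence {r : α → α → Prop} (hr : Equivalence r)
    (hf : ∀ x, r x (f x)) : f.SameCycle ≤ r := by
  rintro x _ ⟨i, rfl⟩
  induction i using Int.induction_on with
  | zero => exact hr.refl x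
  | succ i ih =>
    rw [add_comm, zpow_add, zpow_one, mul_apply]
    exact hr.trans ih (hf _)
  | pred i ih =>
    rw [sub_eq_neg_add, zpow_add, zpow_neg_one, mul_apply]
    have h : r (f⁻¹ ((f ^ (-(i : ℤ))) x)) ((f ^ (-(i : ℤ))) x) := by
      simpa using hf (f⁻¹ ((f ^ (-(i : ℤ))) x))
    exact hr.trans ih (hr.symm h)

noncomputable def orbitCount (f : Perm α) : ℕ :=
  Nat.card (Quotient (SameCycle.setoid f))

theorem orbitCount_one : (1 : Perm α).orbitCount = Nat.card α :=
  (Nat.card_eq_of_bijective _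
    ⟨fun _ _ h => sameCycle_one.mp (Quotient.exact h), Quotient.mk_surjective⟩).symm

theorem orbitCount_le [Finite α] (f : Perm α) : f.orbitCount ≤ Nat.card α :=
  Nat.card_le_card_of_surjective _ Quotient.mk_surjective

section swap

variable [DecidableEq α]

theorem SameCycle.of_mul_swap (h : (f * swap a b).SameCycle x y) (hab : f.SameCycle a b) :
    f.SameCycle x y := by
  refine sameCycle_le_of_equivalence (SameCycle.equivalence f) (fun z => ?_) x y h
  by_cases hza : z = a
  · subst hza
    simpa [sameCycle_apply_right] using hab
  by_cases hzb : z = b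
  · subst hzb
    simpa [sameCycle_apply_right] using hab.symm
  · rw [mul_apply, swap_apply_of_ne_of_ne hza hzb]
    exact sameCycle_apply_right.mpr .rfl

theorem sameCycle_mul_swap_le_mergeClasses :
    (f * swap a b).SameCycle ≤ (SameCycle.setoid f).mergeClasses a b := by
  refine sameCycle_le_of_equivalence ((SameCycle.setoid f).mergeClasses a b).iseqv fun z => ?_
  by_cases hza : z = a
  · rw [hza, mul_apply, swap_apply_left]
    exact Or.inr ⟨Or.inl .rfl, Or.inr (sameCycle_apply_left.mpr .rfl)⟩
  by_cases hzb : z = b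
  · rw [hzb, mul_apply, swap_apply_right]
    exact Or.inr ⟨Or.inr .rfl, Or.inl (sameCycle_apply_left.mpr .rfl)⟩
  · rw [mul_apply, swap_apply_of_ne_of_ne hza hzb]
    exact Or.inl (sameCycle_apply_right.mpr .rfl)

theorem mul_swap_pow_succ_apply {k : ℕ}
    (hk : ∀ i < k, (f ^ (i + 1)) b ≠ a ∧ (f ^ (i + 1)) b ≠ b) :
    ((f * swap a b) ^ (k + 1)) a = (f ^ (k + 1)) b := by
  induction k with
  | zero => simp
  | succ k ih =>
    obtain ⟨ha, hb⟩ := hk k (by omega)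
    rw [pow_succ' (f * swap a b), mul_apply, ih fun i hi => hk i (by omega), mul_apply,
      swap_apply_of_ne_of_ne ha hb, ← mul_apply, ← pow_succ']

variable [Finite α]

theorem sameCycle_mul_swap_of_not_sameCycle (h : ¬f.SameCycle a b) :
    (f * swap a b).SameCycle a b := by
  classical
  have hper : ∃ k, (f ^ (k + 1)) b = b :=
    ⟨orderOf f - 1, by rw [Nat.sub_add_cancel (orderOf_pos f), pow_orderOf_eq_one, one_apply]⟩
  have hpath := mul_swap_pow_succ_apply (a := a) (k := Nat.find hper) fun i hi =>
    ⟨fun hba => h (by rw [← hba]; exact sameCycle_pow_left.mpr .rfl), Nat.find_min hper hi⟩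
  rw [Nat.find_spec hper] at hpath
  exact ⟨(Nat.find hper + 1 : ℕ), by rwa [zpow_natCast]⟩

theorem not_sameCycle_mul_swap_of_sameCycle (hab : a ≠ b) (h : f.SameCycle a b) :
    ¬(f * swap a b).SameCycle a b := by
  classical
  have hreach : ∃ k, (f ^ (k + 1)) a = b := by
    obtain ⟨i, hi, -, rfl⟩ := h.exists_pow_eq''
    exact ⟨i - 1, by rw [Nat.sub_add_cancel hi]⟩
  set k := Nat.find hreach
  have hfirst : ∀ i < k, (f ^ (i + 1)) a ≠ b ∧ (f ^ (i + 1)) a ≠ a := by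
    refine fun i hi => ⟨Nat.find_min hreach hi, fun hia => Nat.find_min hreach
      (show k - i - 1 < k by omega) ?_⟩
    calc (f ^ (k - i - 1 + 1)) a = (f ^ (k - i - 1 + 1)) ((f ^ (i + 1)) a) := by rw [hia]
      _ = (f ^ (k + 1)) a := by rw [← mul_apply, ← pow_add]; congr 2; omega
      _ = b := Nat.find_spec hreach
  -- the orbit of `b` under `f * swap a b` is `{(f ^ (j + 1)) a | j ≤ k}`, which misses `a`
  have hpath : ∀ j ≤ k, ((f * swap a b) ^ (j + 1)) b = (f ^ (j + 1)) a := fun j hj => by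
    rw [swap_comm]
    exact mul_swap_pow_succ_apply fun i hi => hfirst i (by omega)
  have hper : IsPeriodicPt (f * swap a b) (k + 1) b := by
    rw [IsPeriodicPt, IsFixedPt, ← coe_pow, hpath k le_rfl, Nat.find_spec hreach]
  intro hsc
  obtain ⟨m, -, hm⟩ := hsc.symm.exists_pow_eq'
  rw [coe_pow, ← hper.iterate_mod_apply, ← coe_pow] at hm
  have hlt : m % (k + 1) < k + 1 := Nat.mod_lt _ (by omega)
  rcases hmod : m % (k + 1) with _ | j
  · rw [hmod] at hm
    exact hab (by simpa using hm.symm)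
  · rw [hmod, hpath j (by omega)] at hm
    exact (hfirst j (by omega)).2 hm

theorem SameCycle.mul_swap (hxy : f.SameCycle x y) (h : ¬f.SameCycle a b) :
    (f * swap a b).SameCycle x y :=
  SameCycle.of_mul_swap (by rwa [mul_swap_mul_self]) (sameCycle_mul_swap_of_not_sameCycle h)

theorem sameCycle_setoid_mul_swap (h : ¬f.SameCycle a b) :
    SameCycle.setoid (f * swap a b) = (SameCycle.setoid f).mergeClasses a b := by
  have hjoin : ∀ z, f.SameCycle z a ∨ f.SameCycle z b → (f * swap a b).SameCycle z a := by
    rintro z (hz | hz)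
    exacts [hz.mul_swap h, (hz.mul_swap h).trans (sameCycle_mul_swap_of_not_sameCycle h).symm]
  ext x y
  refine ⟨fun hxy => sameCycle_mul_swap_le_mergeClasses x y hxy, ?_⟩
  rintro (hxy | ⟨hx, hy⟩)
  exacts [hxy.mul_swap h, (hjoin x hx).trans (hjoin y hy).symm]

theorem orbitCount_mul_swap_add_one (h : ¬f.SameCycle a b) :
    (f * swap a b).orbitCount + 1 = f.orbitCount := by
  rw [orbitCount, sameCycle_setoid_mul_swap h]
  exact Setoid.card_quotient_mergeClasses h

theorem orbitCount_mul_swap_of_sameCycle (hab : a ≠ b) (h : f.SameCycle a b) :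
    (f * swap a b).orbitCount = f.orbitCount + 1 := by
  simpa [mul_swap_mul_self] using
    (orbitCount_mul_swap_add_one (not_sameCycle_mul_swap_of_sameCycle hab h)).symm

theorem orbitCount_le_orbitCount_mul_swap_add_one (hab : a ≠ b) :
    f.orbitCount ≤ (f * swap a b).orbitCount + 1 := by
  by_cases h : f.SameCycle a b
  · rw [orbitCount_mul_swap_of_sameCycle hab h]
    omega
  · rw [orbitCount_mul_swap_add_one h]

end swap

end Equiv.Perm

open Equiv.Perm

section swapLength

variable {n : ℕ}

theorem exists_isSwap_list_length_eq_swapLength (σ : Perm (Fin n)) :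
    ∃ l : List (Perm (Fin n)), l.length = swapLength n σ ∧ (∀ t ∈ l, t.IsSwap) ∧ l.prod = σ := by
  obtain ⟨l, hprod, hswap⟩ := (truncSwapFactors σ).out
  exact Nat.sInf_mem (s := {k | ∃ l : List (Perm (Fin n)),
    l.length = k ∧ (∀ t ∈ l, t.IsSwap) ∧ l.prod = σ}) ⟨l.length, l, rfl, hswap, hprod⟩

theorem swapLength_prod_le_length {l : List (Perm (Fin n))} (hl : ∀ t ∈ l, t.IsSwap) :
    swapLength n l.prod ≤ l.length :=
  Nat.sInf_le ⟨l, rfl, hl, rfl⟩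

theorem swapLength_mul_swap_le (σ : Perm (Fin n)) {a b : Fin n} (hab : a ≠ b) :
    swapLength n (σ * swap a b) ≤ swapLength n σ + 1 := by
  obtain ⟨l, hlen, hl, rfl⟩ := exists_isSwap_list_length_eq_swapLength σ
  have hl' : ∀ t ∈ l ++ [swap a b], t.IsSwap := by
    simp only [List.mem_append, List.mem_singleton]
    rintro t (ht | rfl)
    exacts [hl t ht, ⟨a, b, hab, rfl⟩]
  simpa [hlen] using swapLength_prod_le_length hl'

theorem sub_orbitCount_prod_le_length {l : List (Perm (Fin n))} (hl : ∀ t ∈ l, t.IsSwap) :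
    n - l.prod.orbitCount ≤ l.length := by
  induction l using List.reverseRecOn with
  | nil => simp [orbitCount_one]
  | append_singleton l t ih =>
    obtain ⟨a, b, hab, rfl⟩ := hl t (by simp)
    have hcount := orbitCount_le_orbitCount_mul_swap_add_one (f := l.prod) hab
    have hlen := ih fun u hu => hl u (by simp [hu])
    simp only [List.prod_append, List.prod_singleton, List.length_append, List.length_singleton]
    omega

theorem swapLength_le_sub_orbitCount (σ : Perm (Fin n)) :
    swapLength n σ ≤ n - σ.orbitCount := by
  by_cases h1 : σ = 1
  · subst h1
    have h0 : swapLength n 1 = 0 := by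
      simpa using swapLength_prod_le_length (l := ([] : List (Perm (Fin n)))) (by simp)
    omega
  obtain ⟨a, ha⟩ : ∃ a, σ a ≠ a := not_forall.mp fun h => h1 (Equiv.ext h)
  have hsplit := orbitCount_mul_swap_of_sameCycle ha.symm (sameCycle_apply_right.mpr .rfl)
  have hbound : (σ * swap a (σ a)).orbitCount ≤ n := by
    simpa using orbitCount_le (σ * swap a (σ a))
  have hmul := swapLength_mul_swap_le (σ * swap a (σ a)) ha.symm
  rw [mul_swap_mul_self] at hmul
  have ih := swapLength_le_sub_orbitCount (σ * swap a (σ a))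
  omega
termination_by n - σ.orbitCount

theorem swapLength_eq_sub_orbitCount (σ : Perm (Fin n)) :
    swapLength n σ = n - σ.orbitCount := by
  refine le_antisymm (swapLength_le_sub_orbitCount σ) ?_
  obtain ⟨l, hlen, hl, rfl⟩ := exists_isSwap_list_length_eq_swapLength σ
  exact hlen ▸ sub_orbitCount_prod_le_length hl

theorem swapLength_mul_swap_of_not_sameCycle {σ : Perm (Fin n)} {a b : Fin n}
    (h : ¬σ.SameCycle a b) : swapLength n (σ * swap a b) = swapLength n σ + 1 := by
  have hcount := orbitCount_mul_swap_add_one h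
  have hbound : σ.orbitCount ≤ n := by simpa using orbitCount_le σ
  rw [swapLength_eq_sub_orbitCount, swapLength_eq_sub_orbitCount]
  omega

end swapLength

theorem interval_edge_is_covering_general (n : ℕ) (σ τ : Equiv.Perm (Fin n))
    (hst : ∃ a b : Fin n, a ≠ b ∧ σ⁻¹ * τ = Equiv.swap a b) :
    ((∀ i j : Fin n, σ.SameCycle i j → τ.SameCycle i j) ∧
        swapLength n τ = swapLength n σ + 1) ∨
    ((∀ i j : Fin n, τ.SameCycle i j → σ.SameCycle i j) ∧
        swapLength n σ = swapLength n τ + 1) := by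
  obtain ⟨a, b, hab, hστ⟩ := hst
  have hτ : τ = σ * swap a b := by rw [← hστ, mul_inv_cancel_left]
  by_cases h : σ.SameCycle a b
  · have hσ : σ = τ * swap a b := by rw [hτ, mul_swap_mul_self]
    have h' : ¬τ.SameCycle a b := hτ ▸ not_sameCycle_mul_swap_of_sameCycle hab h
    exact Or.inr ⟨fun i j hij => hσ ▸ hij.mul_swap h', hσ ▸ swapLength_mul_swap_of_not_sameCycle h'⟩
  · exact Or.inl ⟨fun i j hij => hτ ▸ hij.mul_swap h, hτ ▸ swapLength_mul_swap_of_not_sameCycle h⟩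

/-- Edges of the interval from `e` to `s` are exactly covering relations of the
refinement order on noncrossing partitions: if `σ` and `τ` both lie in the
interval and differ by a transposition, then the orbit partition of one refines
that of the other, with lengths differing by one. -/
theorem interval_edge_is_covering (n : ℕ) (hn : 1 ≤ n) (σ τ : Equiv.Perm (Fin n))
    (hσ : swapLength n σ + swapLength n (σ⁻¹ * finRotate n) = n - 1)
    (hτ : swapLength n τ + swapLength n (τ⁻¹ * finRotate n) = n - 1)
    (hst : ∃ a b : Fin n, a ≠ b ∧ σ⁻¹ * τ = Equiv.swap a b) :
    ((∀ i j : Fin n, σ.SameCycle i j → τ.SameCycle i j) ∧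
        swapLength n τ = swapLength n σ + 1) ∨
    ((∀ i j : Fin n, τ.SameCycle i j → σ.SameCycle i j) ∧
        swapLength n σ = swapLength n τ + 1) :=
  interval_edge_is_covering_general n σ τ hst
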